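/- Let g be a positive, symmetric, differentiable density on ℝ, decreasing near +∞, satisfying |(log g)'| ≤ Λ, Ḡ(y) ≍ g(y)y^{κ−1} as y → ∞ for some κ ∈ [1,2], y ↦ (1+y²)g(y) bounded, and g/φ increasing on [0,∞) from (g/φ)(0) < 1 to ∞. Let χ = (Φ̄/Ḡ)^{-1}. Then: (i) for all u ∈ (0,1], χ(u) ≥ Φ̄^{-1}(u·Ḡ(Φ̄^{-1}(u))); (ii) for u small enough, χ(u) ≤ Φ̄^{-1}(u·Ḡ((−2 log u + 4Λ(−log u)^{1/2} + C)^{1/2})) with C = −2 log g(0) − log(2π); (iii) for some constant C' > 0 and u small enough, χ(u) ≥ (−2 log(u·Ḡ(Φ̄^{-1}(u))) − log log(1/u) − C')^{1/2}. -/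

import Mathlib

open MeasureTheory ProbabilityTheory Filter Set
open scoped Classical ENNReal

/-- The standard normal density `φ`. -/
noncomputable def stdphi (x : ℝ) : ℝ := (Real.sqrt (2 * Real.pi))⁻¹ * Real.exp (-(x ^ 2) / 2)

/-- The standard normal upper tail function `Φ̄`. -/
noncomputable def Phibar (s : ℝ) : ℝ := ∫ x in Set.Ioi s, stdphi x

/-- The inverse of `Φ̄` (as the generalized inverse). -/
noncomputable def PhibarInv (y : ℝ) : ℝ := sInf {x : ℝ | Phibar x ≤ y}

/-- The upper tail function `Ḡ(s) = ∫_s^∞ g`. -/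
noncomputable def Gbar (g : ℝ → ℝ) (s : ℝ) : ℝ := ∫ x in Set.Ioi s, g x

/-- The ℓ-value `ℓ(x; w, g)`. -/
noncomputable def lval (g : ℝ → ℝ) (w x : ℝ) : ℝ :=
  ((1 - w) * stdphi x) / ((1 - w) * stdphi x + w * g x)

/-- The q-value `q(x; w, g)`. -/
noncomputable def qval (g : ℝ → ℝ) (w x : ℝ) : ℝ :=
  ((1 - w) * Phibar |x|) / ((1 - w) * Phibar |x| + w * Gbar g |x|)

/-- `r(w,t) = wt/((1−w)(1−t))`. -/
noncomputable def rwt (w t : ℝ) : ℝ := w * t / ((1 - w) * (1 - t))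

/-- `β(x) = g(x)/φ(x) − 1`. -/
noncomputable def betaf (g : ℝ → ℝ) (x : ℝ) : ℝ := g x / stdphi x - 1

/-- `m̃(w) = −E₀[β(X,w)]`, the minus-expectation of the score at a null coordinate. -/
noncomputable def mtilde (g : ℝ → ℝ) (w : ℝ) : ℝ :=
  -∫ x, betaf g x / (1 + w * betaf g x) * stdphi x

/-- `m₁(μ,w) = E_μ[β(X,w)]` where `X ~ N(μ,1)`. -/
noncomputable def m1 (g : ℝ → ℝ) (μ w : ℝ) : ℝ :=
  ∫ x, betaf g x / (1 + w * betaf g x) * stdphi (x - μ)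

/-!
Part (i) is monotonicity: `Φ̄(χ) = u Ḡ(χ) ≤ u` puts `χ(u)` above `Φ̄⁻¹(u)`, so
`Ḡ(χ) ≤ Ḡ(Φ̄⁻¹(u))`. Since `g/φ` increases on `[0, ∞)`, so does `Ḡ/Φ̄`; hence every `s ≥ 0` with
`Φ̄(s) ≤ u Ḡ(s)` lies above `χ(u)`. For (ii) such an `s` comes from the Mills bound
`Φ̄(s) ≤ φ(s)` and the log-Lipschitz bound `Ḡ(s) ≥ g(0) e^{-Λ(|s|+1)}`; the constant `C` is what
makes `φ(s) = u g(0) e^{-2Λ√(-log u)}` exactly. For (iii), with `C' = 20`, the reverse Mills bound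
`Φ̄(t) ≥ e^{-2} φ(t)/t` shows that the stated `t` satisfies `Φ̄(t) ≥ u Ḡ(Φ̄⁻¹(u))`, and (i)
finishes.
-/

open Real

lemma stdphi_eq_gaussianPDFReal : stdphi = gaussianPDFReal 0 1 := by
  ext x
  simp [stdphi, gaussianPDFReal]

lemma stdphi_pos (x : ℝ) : 0 < stdphi x := by
  unfold stdphi
  positivity

lemma integrable_stdphi : Integrable stdphi :=
  stdphi_eq_gaussianPDFReal ▸ integrable_gaussianPDFReal 0 1

lemma stdphi_eq_exp (x : ℝ) : stdphi x = exp (-(x ^ 2 + log (2 * π)) / 2) := by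
  rw [show -(x ^ 2 + log (2 * π)) / 2 = -(x ^ 2) / 2 + -(log (2 * π) * (1 / 2)) by ring, exp_add,
    exp_neg, ← rpow_def_of_pos (by positivity), ← sqrt_eq_rpow, stdphi, mul_comm]

lemma stdphi_le_exp (x : ℝ) : stdphi x ≤ exp (-x ^ 2 / 2) := by
  rw [stdphi_eq_exp]
  gcongr
  have : 0 ≤ log (2 * π) := log_nonneg (by linarith [pi_gt_three])
  linarith

lemma hasDerivAt_stdphi (x : ℝ) : HasDerivAt stdphi (-x * stdphi x) x := by
  have h : HasDerivAt (fun y : ℝ => -(y ^ 2) / 2) (-x) x :=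
    ((hasDerivAt_pow 2 x).neg.div_const 2).congr_deriv (by ring)
  exact (h.exp.const_mul (√(2 * π))⁻¹).congr_deriv (by unfold stdphi; ring)

lemma tendsto_stdphi_atTop : Tendsto stdphi atTop (nhds 0) := by
  have h : Tendsto (fun x : ℝ => -x ^ 2 / 2) atTop atBot :=
    (tendsto_neg_atTop_atBot.comp (tendsto_pow_atTop two_ne_zero)).atBot_div_const two_pos
  have := (tendsto_exp_atBot.comp h).const_mul (√(2 * π))⁻¹
  rw [mul_zero] at this
  exact this

lemma integrable_mul_stdphi : Integrable fun x => x * stdphi x := by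
  refine ((integrable_mul_exp_neg_mul_sq (b := 1 / 2) one_half_pos).const_mul
    (√(2 * π))⁻¹).congr (Eventually.of_forall fun x => ?_)
  simp only [stdphi]
  ring_nf

lemma integral_Ioi_mul_stdphi (s : ℝ) : ∫ x in Ioi s, x * stdphi x = stdphi s := by
  have := integral_Ioi_of_hasDerivAt_of_tendsto (f := fun x => -stdphi x) (a := s) (m := 0)
    (hasDerivAt_stdphi s).continuousAt.neg.continuousWithinAt
    (fun x _ => (hasDerivAt_stdphi x).neg.congr_deriv (by ring))
    integrable_mul_stdphi.integrableOn (by simpa using tendsto_stdphi_atTop.neg)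
  simpa using this

section TailIntegral

variable {f : ℝ → ℝ}

lemma setIntegral_Ioi_eq_add (hf : Integrable f) {a b : ℝ} (hab : a ≤ b) :
    ∫ x in Ioi a, f x = (∫ x in Ioc a b, f x) + ∫ x in Ioi b, f x := by
  rw [← Ioc_union_Ioi_eq_Ioi hab]
  exact setIntegral_union Ioc_disjoint_Ioi_same measurableSet_Ioi hf.integrableOn hf.integrableOn

lemma setIntegral_pos_of_pos {s : Set ℝ} (hs : MeasurableSet s) (hvol : 0 < volume s)
    (hfs : IntegrableOn f s) (hf : ∀ x ∈ s, 0 < f x) : 0 < ∫ x in s, f x := by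
  rw [setIntegral_pos_iff_support_of_nonneg_ae
    (ae_restrict_of_forall_mem hs fun x hx => (hf x hx).le) hfs]
  have hsupp : s ⊆ Function.support f := fun x hx => (hf x hx).ne'
  rwa [inter_eq_self_of_subset_right hsupp]

lemma mul_le_setIntegral_Ioi (hf : Integrable f) (hf0 : ∀ x, 0 ≤ f x) {a b c : ℝ} (hab : a ≤ b)
    (hc : ∀ x ∈ Ioc a b, c ≤ f x) : (b - a) * c ≤ ∫ x in Ioi a, f x := by
  have h := setIntegral_ge_of_const_le_real measurableSet_Ioc (by simp) hc hf.integrableOn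
  rw [Real.volume_real_Ioc_of_le hab, mul_comm] at h
  exact h.trans (setIntegral_mono_set hf.integrableOn (Eventually.of_forall hf0)
    (Eventually.of_forall Ioc_subset_Ioi_self))

lemma setIntegral_Ioi_mul_lt_mul_of_strictMonoOn_div {g : ℝ → ℝ} (hf : Integrable f)
    (hg : Integrable g) (hf0 : ∀ x, 0 < f x) {c a b : ℝ}
    (hmono : StrictMonoOn (fun x => g x / f x) (Ici c)) (ha : c ≤ a) (hab : a < b) :
    (∫ x in Ioi b, f x) * (∫ x in Ioi a, g x) < (∫ x in Ioi a, f x) * ∫ x in Ioi b, g x := by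
  set r := g b / f b
  have hb : b ∈ Ici c := le_of_lt (ha.trans_lt hab)
  have hfA : 0 < ∫ x in Ioc a b, f x :=
    setIntegral_pos_of_pos measurableSet_Ioc (by simp [hab]) hf.integrableOn fun x _ => hf0 x
  have hfB : 0 < ∫ x in Ioi b, f x :=
    setIntegral_pos_of_pos measurableSet_Ioi (by simp) hf.integrableOn fun x _ => hf0 x
  have hgA : ∫ x in Ioc a b, g x ≤ r * ∫ x in Ioc a b, f x := by
    rw [← integral_const_mul]
    refine setIntegral_mono_on hg.integrableOn (hf.const_mul r).integrableOn measurableSet_Ioc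
      fun x hx => ?_
    have hx : g x / f x ≤ r :=
      (hmono.monotoneOn (le_of_lt (ha.trans_lt hx.1)) hb hx.2)
    rwa [div_le_iff₀ (hf0 x)] at hx
  have hgB : r * ∫ x in Ioi b, f x < ∫ x in Ioi b, g x := by
    rw [← integral_const_mul, ← sub_pos,
      ← integral_sub hg.integrableOn (hf.const_mul r).integrableOn]
    refine setIntegral_pos_of_pos measurableSet_Ioi (by simp)
      (hg.sub (hf.const_mul r)).integrableOn fun x hx => ?_
    have hx : r < g x / f x := hmono hb (mem_Ici.2 ((mem_Ici.1 hb).trans (le_of_lt hx))) hx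
    rw [lt_div_iff₀ (hf0 x)] at hx
    linarith
  rw [setIntegral_Ioi_eq_add hf hab.le, setIntegral_Ioi_eq_add hg hab.le]
  nlinarith [mul_le_mul_of_nonneg_left hgA hfB.le, mul_lt_mul_of_pos_left hgB hfA]

end TailIntegral

lemma Phibar_strictAnti : StrictAnti Phibar := fun a b hab => by
  have h := setIntegral_pos_of_pos (s := Ioc a b) measurableSet_Ioc (by simp [hab])
    integrable_stdphi.integrableOn fun x _ => stdphi_pos x
  rw [Phibar, Phibar, setIntegral_Ioi_eq_add integrable_stdphi hab.le]
  linarith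

lemma Phibar_le_stdphi_div {s : ℝ} (hs : 0 < s) : Phibar s ≤ stdphi s / s := by
  have hint : IntegrableOn (fun x => x * stdphi x / s) (Ioi s) :=
    (integrable_mul_stdphi.div_const s).integrableOn
  calc Phibar s ≤ ∫ x in Ioi s, x * stdphi x / s := by
        refine setIntegral_mono_on integrable_stdphi.integrableOn hint measurableSet_Ioi
          fun x hx => ?_
        rw [le_div_iff₀ hs, mul_comm]
        exact mul_le_mul_of_nonneg_right (le_of_lt hx) (stdphi_pos x).le
    _ = stdphi s / s := by rw [integral_div, integral_Ioi_mul_stdphi]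

lemma Phibar_le_stdphi {s : ℝ} (hs : 1 ≤ s) : Phibar s ≤ stdphi s :=
  (Phibar_le_stdphi_div (by linarith)).trans (div_le_self (stdphi_pos s).le hs)

lemma exp_neg_two_mul_stdphi_div_le_Phibar {t : ℝ} (ht : 1 ≤ t) :
    exp (-2) * stdphi t / t ≤ Phibar t := by
  have ht0 : 0 < t := by linarith
  have hstep : ∀ x ∈ Ioc t (t + t⁻¹), exp (-2) * stdphi t ≤ stdphi x := by
    intro x ⟨htx, hxt⟩
    have ht' : t⁻¹ ≤ 1 := inv_le_one_of_one_le₀ ht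
    have hx2 : x ^ 2 ≤ t ^ 2 + 4 := by nlinarith [mul_inv_cancel₀ ht0.ne', inv_pos.2 ht0]
    rw [stdphi_eq_exp, stdphi_eq_exp, ← exp_add]
    gcongr
    linarith
  have h := mul_le_setIntegral_Ioi integrable_stdphi (fun x => (stdphi_pos x).le)
    (by linarith [inv_pos.2 ht0]) hstep
  rw [add_sub_cancel_left] at h
  calc exp (-2) * stdphi t / t = t⁻¹ * (exp (-2) * stdphi t) := by ring
    _ ≤ Phibar t := h

lemma exp_neg_sq_div_le_Phibar {t x : ℝ} (ht : 1 ≤ t) (htx : t ≤ 3 * x) :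
    exp (-t ^ 2 / 2 - 10) / x ≤ Phibar t := by
  have hx : 0 < x := by linarith
  have hlog : log (2 * π) ≤ 6 := by
    linarith [log_le_sub_one_of_pos (by positivity : 0 < 2 * π), pi_lt_d2]
  have hconst : 3 * exp (log (2 * π) / 2 - 8) ≤ 1 := by
    have h5 : exp (log (2 * π) / 2 - 8) * exp 5 ≤ 1 := by
      rw [← exp_add, exp_le_one_iff]; linarith
    nlinarith [add_one_le_exp 5, exp_pos (log (2 * π) / 2 - 8)]
  refine le_trans ?_ (exp_neg_two_mul_stdphi_div_le_Phibar ht)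
  rw [div_le_div_iff₀ hx (by linarith), stdphi_eq_exp, ← exp_add]
  calc exp (-t ^ 2 / 2 - 10) * t
      = exp (-2 + -(t ^ 2 + log (2 * π)) / 2) * (exp (log (2 * π) / 2 - 8) * t) := by
        rw [← mul_assoc, ← exp_add]; ring_nf
    _ ≤ exp (-2 + -(t ^ 2 + log (2 * π)) / 2) * x := by
        gcongr
        nlinarith [exp_pos (log (2 * π) / 2 - 8)]

lemma PhibarInv_le {y c : ℝ} (hc : 0 ≤ c) (h : Phibar c ≤ y) : PhibarInv y ≤ c := by
  by_cases hb : BddBelow {x : ℝ | Phibar x ≤ y}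
  · exact csInf_le hb h
  · -- `sInf` of a set that is not bounded below is the junk value `0`
    rw [PhibarInv, Real.sInf_of_not_bddBelow hb]
    exact hc

lemma le_PhibarInv {y t : ℝ} (hy : 0 < y) (h : y ≤ Phibar t) : t ≤ PhibarInv y := by
  have hne : {x : ℝ | Phibar x ≤ y}.Nonempty := by
    refine ⟨y⁻¹, (Phibar_le_stdphi_div (inv_pos.2 hy)).trans ?_⟩
    rw [div_inv_eq_mul, mul_comm]
    have : stdphi y⁻¹ ≤ 1 := (stdphi_le_exp _).trans (exp_le_one_iff.2 (by nlinarith))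
    nlinarith
  refine le_csInf hne fun x hx => ?_
  by_contra! hxt
  exact (Phibar_strictAnti hxt).not_ge (h.trans' hx)

lemma sqrt_le_PhibarInv {v x : ℝ} (hv : 0 < v) (hx : 0 < x)
    (h1 : 1 ≤ -2 * log v - 2 * log x - 20) (h3 : -2 * log v - 2 * log x - 20 ≤ (3 * x) ^ 2) :
    √(-2 * log v - 2 * log x - 20) ≤ PhibarInv v := by
  set B := -2 * log v - 2 * log x - 20
  have ht : √B ≤ 3 * x := by
    have := sqrt_le_sqrt h3
    rwa [sqrt_sq (by linarith)] at this
  refine le_PhibarInv hv ((exp_neg_sq_div_le_Phibar (one_le_sqrt.2 h1) ht).trans' (le_of_eq ?_))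
  rw [sq_sqrt (by linarith), show -B / 2 - 10 = log v + log x by simp only [B]; ring, exp_add,
    exp_log hv, exp_log hx]
  field_simp

section LogLipschitz

variable {g : ℝ → ℝ} {Λ : ℝ}

lemma mul_exp_neg_le_of_abs_deriv_log_le (hpos : ∀ x, 0 < g x) (hdiff : Differentiable ℝ g)
    (hlip : ∀ x, |deriv (fun y => log (g y)) x| ≤ Λ) (a b : ℝ) :
    g a * exp (-(Λ * |b - a|)) ≤ g b := by
  have h := convex_univ.norm_image_sub_le_of_norm_deriv_le
    (fun x _ => (hdiff x).log (hpos x).ne') (fun x _ => hlip x) (mem_univ a) (mem_univ b)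
  rw [Real.norm_eq_abs, Real.norm_eq_abs] at h
  rw [← exp_log (hpos a), ← exp_log (hpos b), ← exp_add]
  exact exp_le_exp.2 (by linarith [neg_abs_le (log (g b) - log (g a))])

lemma mul_exp_neg_le_Gbar (hpos : ∀ x, 0 < g x) (hg : Integrable g) (hdiff : Differentiable ℝ g)
    (hlip : ∀ x, |deriv (fun y => log (g y)) x| ≤ Λ) (s : ℝ) :
    g 0 * exp (-(Λ * (|s| + 1))) ≤ Gbar g s := by
  have hΛ : 0 ≤ Λ := (abs_nonneg _).trans (hlip 0)
  have hstep : ∀ x ∈ Ioc s (s + 1), g 0 * exp (-(Λ * (|s| + 1))) ≤ g x := by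
    intro x ⟨hsx, hxs⟩
    have hx : |x - 0| ≤ |s| + 1 := by
      rw [sub_zero]
      linarith [abs_sub_abs_le_abs_sub x s, abs_of_pos (sub_pos.2 hsx)]
    refine (mul_exp_neg_le_of_abs_deriv_log_le hpos hdiff hlip 0 x).trans' ?_
    have := hpos 0
    gcongr
  have h := mul_le_setIntegral_Ioi hg (fun x => (hpos x).le) (by linarith) hstep
  rwa [add_sub_cancel_left, one_mul] at h

end LogLipschitz

lemma exists_eq_exp_neg_sq {u K : ℝ} (hu : 0 < u) (huK : u ≤ exp (-K ^ 2)) :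
    ∃ x, K ≤ x ∧ u = exp (-x ^ 2) := by
  have hlog : K ^ 2 ≤ -log u := by
    have := log_le_log hu huK
    rw [log_exp] at this
    linarith
  refine ⟨√(-log u), le_sqrt_of_sq_le hlog, ?_⟩
  rw [sq_sqrt (hlog.trans' (sq_nonneg K)), neg_neg, exp_log hu]

section Threshold

variable {g : ℝ → ℝ} {Λ : ℝ}

lemma Gbar_pos (hpos : ∀ x, 0 < g x) (hg : Integrable g) (s : ℝ) : 0 < Gbar g s :=
  setIntegral_pos_of_pos measurableSet_Ioi (by simp) hg.integrableOn fun x _ => hpos x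

lemma Gbar_antitone (hpos : ∀ x, 0 < g x) (hg : Integrable g) : Antitone (Gbar g) :=
  fun _ _ hab => setIntegral_mono_set hg.integrableOn (Eventually.of_forall fun x => (hpos x).le)
    (Eventually.of_forall (Ioi_subset_Ioi hab))

lemma Gbar_le_one (hpos : ∀ x, 0 < g x) (hdens : ∫ x, g x = 1) (s : ℝ) : Gbar g s ≤ 1 :=
  hdens ▸ setIntegral_le_integral (integrable_of_integral_eq_one hdens)
    (Eventually.of_forall fun x => (hpos x).le)

lemma PhibarInv_mul_Gbar_PhibarInv_le (hpos : ∀ x, 0 < g x) (hdens : ∫ x, g x = 1) {u c : ℝ}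
    (hu : 0 ≤ u) (hc : 0 ≤ c) (hcu : Phibar c = u * Gbar g c) :
    PhibarInv (u * Gbar g (PhibarInv u)) ≤ c := by
  have hg : Integrable g := integrable_of_integral_eq_one hdens
  have hpc : PhibarInv u ≤ c :=
    PhibarInv_le hc (hcu ▸ mul_le_of_le_one_right hu (Gbar_le_one hpos hdens c))
  exact PhibarInv_le hc (hcu ▸ mul_le_mul_of_nonneg_left (Gbar_antitone hpos hg hpc) hu)

lemma le_PhibarInv_mul_Gbar (hpos : ∀ x, 0 < g x) (hg : Integrable g)
    (hinc : StrictMonoOn (fun x => g x / stdphi x) (Ici 0)) {u c s : ℝ} (hu : 0 < u)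
    (hcu : Phibar c = u * Gbar g c) (hs : 0 ≤ s) (hsu : Phibar s ≤ u * Gbar g s) :
    c ≤ PhibarInv (u * Gbar g s) := by
  have hcs : c ≤ s := by
    by_contra! hsc
    have h : Phibar c * Gbar g s < Phibar s * Gbar g c :=
      setIntegral_Ioi_mul_lt_mul_of_strictMonoOn_div integrable_stdphi hg stdphi_pos hinc hs hsc
    rw [hcu] at h
    nlinarith [mul_le_mul_of_nonneg_right hsu (Gbar_pos hpos hg c).le]
  exact le_PhibarInv (mul_pos hu (Gbar_pos hpos hg s))
    (hcu ▸ mul_le_mul_of_nonneg_left (Gbar_antitone hpos hg hcs) hu.le)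

lemma exists_Phibar_le_mul_Gbar (hpos : ∀ x, 0 < g x) (hg : Integrable g)
    (hdiff : Differentiable ℝ g) (hlip : ∀ x, |deriv (fun y => log (g y)) x| ≤ Λ) :
    ∃ u₀ : ℝ, 0 < u₀ ∧ u₀ ≤ 1 ∧ ∀ u : ℝ, 0 < u → u ≤ u₀ →
      Phibar √(-2 * log u + 4 * Λ * √(-log u) + (-2 * log (g 0) - log (2 * π))) ≤
        u * Gbar g √(-2 * log u + 4 * Λ * √(-log u) + (-2 * log (g 0) - log (2 * π))) := by
  set C := -2 * log (g 0) - log (2 * π)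
  have hΛ : 0 ≤ Λ := (abs_nonneg _).trans (hlip 0)
  set K := |C| + 4 * Λ + 4
  have hK : 4 ≤ K := by linarith [abs_nonneg C]
  refine ⟨exp (-K ^ 2), exp_pos _, exp_le_one_iff.2 (by nlinarith), fun u hu huK => ?_⟩
  obtain ⟨x, hKx, rfl⟩ := exists_eq_exp_neg_sq hu huK
  rw [log_exp, neg_neg, sqrt_sq (by linarith)]
  set A := -2 * -x ^ 2 + 4 * Λ * x + C
  have hA1 : 1 ≤ A := by nlinarith [neg_abs_le C]
  have hA : A ≤ (2 * x - 1) ^ 2 := by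
    have h1 : x * K ≤ x * x := mul_le_mul_of_nonneg_left hKx (by linarith)
    have h2 : |C| ≤ x * |C| := le_mul_of_one_le_left (abs_nonneg C) (by linarith)
    nlinarith [le_abs_self C]
  have hs1 : 1 ≤ √A := one_le_sqrt.2 hA1
  have hs : √A + 1 ≤ 2 * x := by
    have := sqrt_le_sqrt hA
    rw [sqrt_sq (by linarith)] at this
    linarith
  calc Phibar √A ≤ stdphi √A := Phibar_le_stdphi hs1
    _ = exp (-x ^ 2) * (g 0 * exp (-(Λ * (2 * x)))) := by
        rw [stdphi_eq_exp, sq_sqrt (by linarith), ← exp_log (hpos 0), ← exp_add, ← exp_add]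
        congr 1
        simp only [A, C]
        ring
    _ ≤ exp (-x ^ 2) * (g 0 * exp (-(Λ * (|√A| + 1)))) := by
        have := hpos 0
        rw [abs_of_nonneg (sqrt_nonneg A)]
        gcongr
    _ ≤ exp (-x ^ 2) * Gbar g √A := by
        gcongr
        exact mul_exp_neg_le_Gbar hpos hg hdiff hlip _

lemma exp_neg_mul_le_Gbar_PhibarInv (hpos : ∀ x, 0 < g x) (hg : Integrable g)
    (hdiff : Differentiable ℝ g) (hlip : ∀ x, |deriv (fun y => log (g y)) x| ≤ Λ) {x : ℝ}
    (hx : 1 ≤ 2 * x) : g 0 * exp (-(Λ * (2 * x + 1))) ≤ Gbar g (PhibarInv (exp (-x ^ 2))) := by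
  have hp : PhibarInv (exp (-x ^ 2)) ≤ 2 * x := PhibarInv_le (by linarith) <|
    calc Phibar (2 * x) ≤ stdphi (2 * x) := Phibar_le_stdphi hx
      _ ≤ exp (-(2 * x) ^ 2 / 2) := stdphi_le_exp _
      _ ≤ exp (-x ^ 2) := exp_le_exp.2 (by nlinarith)
  have h := mul_exp_neg_le_Gbar hpos hg hdiff hlip (2 * x)
  rw [abs_of_nonneg (by linarith)] at h
  exact h.trans (Gbar_antitone hpos hg hp)

lemma exists_sqrt_le_PhibarInv_mul_Gbar_PhibarInv (hpos : ∀ x, 0 < g x)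
    (hdens : ∫ x, g x = 1) (hdiff : Differentiable ℝ g)
    (hlip : ∀ x, |deriv (fun y => log (g y)) x| ≤ Λ) :
    ∃ u₁ : ℝ, 0 < u₁ ∧ u₁ ≤ 1 ∧ ∀ u : ℝ, 0 < u → u ≤ u₁ →
      √(-2 * log (u * Gbar g (PhibarInv u)) - log (log (1 / u)) - 20) ≤
        PhibarInv (u * Gbar g (PhibarInv u)) := by
  have hΛ : 0 ≤ Λ := (abs_nonneg _).trans (hlip 0)
  have hK : 20 ≤ Λ + |log (g 0)| + 20 := by linarith [abs_nonneg (log (g 0))]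
  refine ⟨exp (-(Λ + |log (g 0)| + 20) ^ 2), exp_pos _, exp_le_one_iff.2 (by nlinarith),
    fun u hu huK => ?_⟩
  obtain ⟨x, hKx, rfl⟩ := exists_eq_exp_neg_sq hu huK
  have hΛx : Λ ≤ x := by linarith [abs_nonneg (log (g 0))]
  have hg0x : -x ≤ log (g 0) := by linarith [neg_abs_le (log (g 0))]
  set v := exp (-x ^ 2) * Gbar g (PhibarInv (exp (-x ^ 2)))
  have hv_le : v ≤ exp (-x ^ 2) :=
    mul_le_of_le_one_right (exp_pos _).le (Gbar_le_one hpos hdens _)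
  have hv_ge : exp (-x ^ 2) * (g 0 * exp (-(Λ * (2 * x + 1)))) ≤ v :=
    mul_le_mul_of_nonneg_left (exp_neg_mul_le_Gbar_PhibarInv hpos
      (integrable_of_integral_eq_one hdens) hdiff hlip (by linarith)) (exp_pos _).le
  have hg0 := hpos 0
  have hv : 0 < v := lt_of_lt_of_le (by positivity) hv_ge
  have hlogv_le : log v ≤ -x ^ 2 := by simpa using log_le_log hv hv_le
  have hlogv_ge : -x ^ 2 + (log (g 0) + -(Λ * (2 * x + 1))) ≤ log v := by
    have := log_le_log (by positivity) hv_ge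
    rwa [log_mul (exp_pos _).ne' (by positivity), log_mul hg0.ne' (exp_pos _).ne', log_exp,
      log_exp] at this
  have hlogx : 0 ≤ log x ∧ log x ≤ x - 1 :=
    ⟨log_nonneg (by linarith), log_le_sub_one_of_pos (by linarith)⟩
  rw [one_div, ← exp_neg, log_exp, neg_neg, log_pow, Nat.cast_ofNat]
  have h1 : Λ * (2 * x + 1) ≤ x * (2 * x + 1) := mul_le_mul_of_nonneg_right hΛx (by linarith)
  exact sqrt_le_PhibarInv hv (by linarith) (by nlinarith) (by nlinarith)

end Threshold

theorem chi_threshold_bounds_general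
    (g : ℝ → ℝ) (Λ : ℝ)
    (hpos : ∀ x, 0 < g x)
    (hdiff : Differentiable ℝ g) (hdens : ∫ x, g x = 1)
    (hlip : ∀ x : ℝ, |deriv (fun y => Real.log (g y)) x| ≤ Λ)
    (hinc : StrictMonoOn (fun x => g x / stdphi x) (Set.Ici 0))
    (χ : ℝ → ℝ)
    (hχ : ∀ u : ℝ, 0 < u → u ≤ 1 → 0 ≤ χ u ∧ Phibar (χ u) = u * Gbar g (χ u)) :
    (∀ u : ℝ, 0 < u → u ≤ 1 → PhibarInv (u * Gbar g (PhibarInv u)) ≤ χ u) ∧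
      (∃ u₀ : ℝ, 0 < u₀ ∧ u₀ ≤ 1 ∧ ∀ u : ℝ, 0 < u → u ≤ u₀ →
        χ u ≤ PhibarInv (u * Gbar g (Real.sqrt
          (-2 * Real.log u + 4 * Λ * Real.sqrt (-Real.log u) +
            (-2 * Real.log (g 0) - Real.log (2 * Real.pi)))))) ∧
      (∃ C' : ℝ, 0 < C' ∧ ∃ u₁ : ℝ, 0 < u₁ ∧ u₁ ≤ 1 ∧ ∀ u : ℝ, 0 < u → u ≤ u₁ →
        Real.sqrt (-2 * Real.log (u * Gbar g (PhibarInv u)) -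
          Real.log (Real.log (1 / u)) - C') ≤ χ u) := by
  have hg : Integrable g := integrable_of_integral_eq_one hdens
  have lower : ∀ u : ℝ, 0 < u → u ≤ 1 → PhibarInv (u * Gbar g (PhibarInv u)) ≤ χ u :=
    fun u hu hu1 => PhibarInv_mul_Gbar_PhibarInv_le hpos hdens hu.le (hχ u hu hu1).1 (hχ u hu hu1).2
  refine ⟨lower, ?_, ?_⟩
  · obtain ⟨u₀, hu₀, hu₀1, hsmall⟩ := exists_Phibar_le_mul_Gbar hpos hg hdiff hlip
    exact ⟨u₀, hu₀, hu₀1, fun u hu huu₀ => le_PhibarInv_mul_Gbar hpos hg hinc hu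
      (hχ u hu (huu₀.trans hu₀1)).2 (sqrt_nonneg _) (hsmall u hu huu₀)⟩
  · obtain ⟨u₁, hu₁, hu₁1, hsmall⟩ :=
      exists_sqrt_le_PhibarInv_mul_Gbar_PhibarInv hpos hdens hdiff hlip
    exact ⟨20, by norm_num, u₁, hu₁, hu₁1, fun u hu huu₁ =>
      (hsmall u hu huu₁).trans (lower u hu (huu₁.trans hu₁1))⟩

/-- **Lemma (bounds on the threshold `χ`).** Let `g` be a positive symmetric differentiable
density, decreasing near `+∞`, with `|(log g)'| ≤ Λ`, `Ḡ(y) ≍ g(y)y^{κ−1}` as `y → ∞`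
(`κ ∈ [1,2]`), `(1+y²)g(y)` bounded, and `g/φ` increasing on `[0,∞)` from `(g/φ)(0) < 1` to
`∞`. Let `χ = (Φ̄/Ḡ)⁻¹`. Then:
(i) for all `u ∈ (0,1]`, `χ(u) ≥ Φ̄⁻¹(u·Ḡ(Φ̄⁻¹(u)))`;
(ii) for `u` small enough,
`χ(u) ≤ Φ̄⁻¹(u·Ḡ((−2 log u + 4Λ(−log u)^{1/2} + C)^{1/2}))` with `C = −2 log g(0) − log(2π)`;
(iii) for some `C' > 0` and `u` small enough,
`χ(u) ≥ (−2 log(u·Ḡ(Φ̄⁻¹(u))) − log log(1/u) − C')^{1/2}`. -/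
theorem chi_threshold_bounds
    (g : ℝ → ℝ) (Λ κ : ℝ)
    (hpos : ∀ x, 0 < g x) (hsymm : ∀ x, g (-x) = g x)
    (hdiff : Differentiable ℝ g) (hdens : ∫ x, g x = 1)
    (hdec : ∃ M : ℝ, StrictAntiOn g (Set.Ici M))
    (hΛ : 0 < Λ) (hlip : ∀ x : ℝ, |deriv (fun y => Real.log (g y)) x| ≤ Λ)
    (hκ : κ ∈ Set.Icc (1 : ℝ) 2)
    (htail : ∃ c C : ℝ, 0 < c ∧ 0 < C ∧ ∃ y₀ : ℝ, ∀ y ≥ y₀,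
      c * (g y * y ^ (κ - 1)) ≤ Gbar g y ∧ Gbar g y ≤ C * (g y * y ^ (κ - 1)))
    (hbdd : ∃ M : ℝ, ∀ y : ℝ, (1 + y ^ 2) * g y ≤ M)
    (hinc : StrictMonoOn (fun x => g x / stdphi x) (Set.Ici 0))
    (h0 : g 0 / stdphi 0 < 1)
    (hinf : Filter.Tendsto (fun x => g x / stdphi x) Filter.atTop Filter.atTop)
    (χ : ℝ → ℝ)
    (hχ : ∀ u : ℝ, 0 < u → u ≤ 1 → 0 ≤ χ u ∧ Phibar (χ u) = u * Gbar g (χ u)) :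
    (∀ u : ℝ, 0 < u → u ≤ 1 → PhibarInv (u * Gbar g (PhibarInv u)) ≤ χ u) ∧
      (∃ u₀ : ℝ, 0 < u₀ ∧ u₀ ≤ 1 ∧ ∀ u : ℝ, 0 < u → u ≤ u₀ →
        χ u ≤ PhibarInv (u * Gbar g (Real.sqrt
          (-2 * Real.log u + 4 * Λ * Real.sqrt (-Real.log u) +
            (-2 * Real.log (g 0) - Real.log (2 * Real.pi)))))) ∧
      (∃ C' : ℝ, 0 < C' ∧ ∃ u₁ : ℝ, 0 < u₁ ∧ u₁ ≤ 1 ∧ ∀ u : ℝ, 0 < u → u ≤ u₁ →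
        Real.sqrt (-2 * Real.log (u * Gbar g (PhibarInv u)) -
          Real.log (Real.log (1 / u)) - C') ≤ χ u) :=
  chi_threshold_bounds_general g Λ hpos hdiff hdens hlip hinc χ hχ
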